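/- (Lemma 6.4) Let f : ℝ^n → ℝ be differentiable, convex, and coordinate-wise smooth with parameters (L_1,…,L_n), each L_i > 0. Fix β ∈ [0,1], set α := (1−β)/2, S_α := Σ_i L_i^α, p_i := L_i^α/S_α. Fix η > 0 with 1/(η·S_α²) ≤ 1, set τ := 1/(η·S_α²), fix y_k, z_k ∈ ℝ^n and let x_{k+1} := τ·z_k + (1−τ)·y_k. For each i define y^{(i)} := x_{k+1} − (1/L_i)·∇_i f(x_{k+1})·e_i and z^{(i)} := z_k − (η/(p_i·L_i^β))·∇_i f(x_{k+1})·e_i. Then for every u ∈ ℝ^n: 0 ≤ (η²S_α² − η)·(f(y_k) − f(u)) − η²S_α²·Σ_{i=1}^n p_i·(f(y^{(i)}) − f(u)) + (1/2)‖z_k − u‖²_{L_β} − (1/2)·Σ_{i=1}^n p_i·‖z^{(i)} − u‖²_{L_β}. -/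

import Mathlib

/-!
Average over the sampled coordinate `i` with weights `p i`. Coordinate-wise smoothness gives the
descent `f (y⁽ⁱ⁾) ≤ f x_{k+1} - (∇ᵢ f)² / (2 Lᵢ)`, and expanding the weighted norms gives
`Σ pᵢ ‖z⁽ⁱ⁾ - u‖² = ‖z_k - u‖² - 2η ⟨∇f, z_k - u⟩ + η² S_α² Σ pᵢ (∇ᵢ f)² / Lᵢ`, because
`pᵢ² Lᵢ^β S_α² = Lᵢ`; so the squared-gradient terms cancel. The coupling
`z_k - u = (η S_α² - 1)(x_{k+1} - y_k) + (x_{k+1} - u)` and the gradient inequality of convexity at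
`x_{k+1}`, applied towards `y_k` and towards `u`, bound the remaining linear term.
-/

/-- The i-th standard basis vector of ℝ^n. -/
def basisVec {n : ℕ} (i : Fin n) : Fin n → ℝ := Pi.single i 1

/-- The i-th partial derivative ∇_i f(x). -/
noncomputable def coordGrad {n : ℕ} (f : (Fin n → ℝ) → ℝ) (x : Fin n → ℝ) (i : Fin n) : ℝ :=
  fderiv ℝ f x (basisVec i)

/-- f is coordinate-wise smooth with parameters (L_1, …, L_n):
`|∇_i f(x + δ e_i) − ∇_i f(x)| ≤ L_i |δ|` for all x, δ, i. -/
def CoordSmooth {n : ℕ} (f : (Fin n → ℝ) → ℝ) (L : Fin n → ℝ) : Prop :=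
  ∀ (x : Fin n → ℝ) (δ : ℝ) (i : Fin n),
    |coordGrad f (x + δ • basisVec i) i - coordGrad f x i| ≤ L i * |δ|

/-- Weighted squared norm ‖v‖²_{L_β} := Σ_i L_i^β · v_i². -/
noncomputable def wnormSq {n : ℕ} (L : Fin n → ℝ) (β : ℝ) (v : Fin n → ℝ) : ℝ :=
  ∑ i, L i ^ β * v i ^ 2

theorem ConvexOn.add_fderiv_sub_le {E : Type*} [NormedAddCommGroup E] [NormedSpace ℝ E]
    {s : Set E} {f : E → ℝ} {x y : E} (hconv : ConvexOn ℝ s f) (hx : x ∈ s) (hy : y ∈ s)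
    (hf : DifferentiableAt ℝ f x) :
    f x + fderiv ℝ f x (y - x) ≤ f y := by
  have hline : ConvexOn ℝ (AffineMap.lineMap x y ⁻¹' s) (f ∘ AffineMap.lineMap (k := ℝ) x y) :=
    hconv.comp_affineMap _
  have hderiv : HasDerivAt (f ∘ AffineMap.lineMap (k := ℝ) x y) (fderiv ℝ f x (y - x)) 0 :=
    hf.hasFDerivAt.comp_hasDerivAt_of_eq 0 AffineMap.hasDerivAt_lineMap (by simp)
  have := hline.le_slope_of_hasDerivAt (x := 0) (y := 1) (by simpa using hx) (by simpa using hy)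
    one_pos hderiv
  simp only [slope_def_field, Function.comp_apply, AffineMap.lineMap_apply_zero,
    AffineMap.lineMap_apply_one, sub_zero, div_one] at this
  linarith

theorem le_add_deriv_mul_add_sq_of_deriv_sub_le {φ φ' : ℝ → ℝ} {K t : ℝ} (ht : 0 ≤ t)
    (hφ : ∀ s ∈ Set.Icc 0 t, HasDerivAt φ (φ' s) s)
    (hφ' : ∀ s ∈ Set.Icc 0 t, φ' s - φ' 0 ≤ K * s) :
    φ t ≤ φ 0 + φ' 0 * t + K / 2 * t ^ 2 := by
  have hB : ∀ s, HasDerivAt (fun s => φ 0 + φ' 0 * s + K / 2 * s ^ 2) (φ' 0 + K * s) s := by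
    intro s
    refine ((((hasDerivAt_id' s).const_mul (φ' 0)).const_add (φ 0)).add
      ((hasDerivAt_pow 2 s).const_mul (K / 2))).congr_deriv ?_
    ring
  refine image_le_of_deriv_right_le_deriv_boundary (f' := φ') (B' := fun s => φ' 0 + K * s)
    (fun s hs => (hφ s hs).continuousAt.continuousWithinAt)
    (fun s hs => (hφ s (Set.Ico_subset_Icc_self hs)).hasDerivWithinAt) (by simp)
    (fun s _ => (hB s).continuousAt.continuousWithinAt) (fun s _ => (hB s).hasDerivWithinAt)
    (fun s hs => by linarith [hφ' s (Set.Ico_subset_Icc_self hs)]) ⟨ht, le_rfl⟩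

theorem fderiv_apply_eq_sum_mul_coordGrad {n : ℕ} (f : (Fin n → ℝ) → ℝ) (x w : Fin n → ℝ) :
    fderiv ℝ f x w = ∑ i, w i * coordGrad f x i := by
  have hw : w = ∑ i, w i • basisVec i := by
    ext j
    simp [basisVec, Pi.single_apply]
  conv_lhs => rw [hw]
  simp [coordGrad]

theorem CoordSmooth.le_sub_sq_div {n : ℕ} {f : (Fin n → ℝ) → ℝ} {L : Fin n → ℝ}
    (hsmooth : CoordSmooth f L) (hf : Differentiable ℝ f) (x : Fin n → ℝ) {i : Fin n}
    (hLi : 0 < L i) :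
    f (x - (1 / L i * coordGrad f x i) • basisVec i) ≤ f x - coordGrad f x i ^ 2 / (2 * L i) := by
  set g := coordGrad f x i
  set γ : ℝ → Fin n → ℝ := fun t => x - (t * g) • basisVec i
  have hγ : ∀ t, HasDerivAt γ (-(g • basisVec i)) t := fun t => by
    simpa using (((hasDerivAt_id' t).mul_const g).smul_const (basisVec i)).const_sub x
  have hφ : ∀ t, HasDerivAt (f ∘ γ) (-g * coordGrad f (γ t) i) t := fun t => by
    simpa [coordGrad] using (hf (γ t)).hasFDerivAt.comp_hasDerivAt t (hγ t)
  have hφ' : ∀ t ∈ Set.Icc 0 (1 / L i),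
      -g * coordGrad f (γ t) i - -g * coordGrad f (γ 0) i ≤ L i * g ^ 2 * t := by
    rintro t ⟨ht, -⟩
    have hlip := hsmooth x (-(t * g)) i
    rw [neg_smul, ← sub_eq_add_neg] at hlip
    have hγ0 : γ 0 = x := by simp [γ]
    calc -g * coordGrad f (γ t) i - -g * coordGrad f (γ 0) i
        ≤ |g| * |coordGrad f (γ t) i - g| := by
          rw [hγ0, ← abs_neg g, ← abs_mul]
          exact le_of_eq_of_le (by ring) (le_abs_self _)
      _ ≤ |g| * (L i * |-(t * g)|) := by gcongr
      _ = L i * g ^ 2 * t := by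
          rw [abs_neg, abs_mul, abs_of_nonneg ht, ← sq_abs g]
          ring
  have key := le_add_deriv_mul_add_sq_of_deriv_sub_le (by positivity) (fun t _ => hφ t) hφ'
  simp only [Function.comp_apply, γ, zero_mul, zero_smul, sub_zero] at key
  calc f (x - (1 / L i * g) • basisVec i)
      ≤ f x + -g * g * (1 / L i) + L i * g ^ 2 / 2 * (1 / L i) ^ 2 := by
        simpa only [mul_comm (1 / L i) g] using key
    _ = f x - g ^ 2 / (2 * L i) := by
        field_simp
        ring

theorem wnormSq_sub_smul_basisVec {n : ℕ} (L : Fin n → ℝ) (β : ℝ) (w : Fin n → ℝ) (i : Fin n)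
    (c : ℝ) :
    wnormSq L β (w - c • basisVec i) = wnormSq L β w - 2 * L i ^ β * c * w i + L i ^ β * c ^ 2 := by
  have hterm : ∀ j, L j ^ β * (w - c • basisVec i) j ^ 2
      = L j ^ β * w j ^ 2
        + (Pi.single i (L i ^ β * c ^ 2 - 2 * L i ^ β * c * w i) : Fin n → ℝ) j := by
    intro j
    rcases eq_or_ne j i with rfl | hj
    · simp [basisVec]
      ring
    · simp [basisVec, hj]
  simp only [wnormSq, hterm, Finset.sum_add_distrib, Finset.sum_pi_single']
  simp
  ring

theorem sum_mul_wnormSq_sub_smul_basisVec {n : ℕ} {L p : Fin n → ℝ} {β : ℝ}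
    (hp : ∑ i, p i = 1) (hpL : ∀ i, p i * L i ^ β ≠ 0) (η : ℝ) (g w : Fin n → ℝ) :
    ∑ i, p i * wnormSq L β (w - (η / (p i * L i ^ β) * g i) • basisVec i)
      = wnormSq L β w - 2 * η * ∑ i, g i * w i + η ^ 2 * ∑ i, g i ^ 2 / (p i * L i ^ β) := by
  have hterm : ∀ i, p i * wnormSq L β (w - (η / (p i * L i ^ β) * g i) • basisVec i)
      = p i * wnormSq L β w - 2 * η * (g i * w i) + η ^ 2 * (g i ^ 2 / (p i * L i ^ β)) := by
    intro i
    obtain ⟨hp0, hL0⟩ := mul_ne_zero_iff.mp (hpL i)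
    rw [wnormSq_sub_smul_basisVec]
    field_simp
  simp only [hterm, Finset.sum_add_distrib, Finset.sum_sub_distrib, ← Finset.sum_mul,
    ← Finset.mul_sum, hp, one_mul]

theorem one_div_mul_rpow_eq {l α β S p : ℝ} (hl : 0 < l) (hαβ : 2 * α + β = 1) (hS : S ≠ 0)
    (hp : p = l ^ α / S) :
    1 / (p * l ^ β) = S ^ 2 * p / l := by
  have hl_eq : l ^ α * l ^ α * l ^ β = l := by
    rw [← Real.rpow_add hl, ← Real.rpow_add hl, ← two_mul, hαβ, Real.rpow_one]
  have := (Real.rpow_pos_of_pos hl α).ne'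
  have := (Real.rpow_pos_of_pos hl β).ne'
  rw [hp]
  field_simp
  linear_combination -hl_eq

theorem sum_mul_wnormSq_sub_smul_basisVec_of_eq_rpow_div {n : ℕ} {L p : Fin n → ℝ} {α β Sα : ℝ}
    (hL : ∀ i, 0 < L i) (hαβ : 2 * α + β = 1) (hSα : 0 < Sα) (hp : ∀ i, p i = L i ^ α / Sα)
    (hpsum : ∑ i, p i = 1) (η : ℝ) (g w : Fin n → ℝ) :
    ∑ i, p i * wnormSq L β (w - (η / (p i * L i ^ β) * g i) • basisVec i)
      = wnormSq L β w - 2 * η * ∑ i, g i * w i + η ^ 2 * Sα ^ 2 * ∑ i, p i * (g i ^ 2 / L i) := by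
  have hpL : ∀ i, p i * L i ^ β ≠ 0 := fun i => by
    rw [hp i]
    exact (mul_pos (div_pos (Real.rpow_pos_of_pos (hL i) α) hSα)
      (Real.rpow_pos_of_pos (hL i) β)).ne'
  have hweight : ∀ i, g i ^ 2 / (p i * L i ^ β) = Sα ^ 2 * (p i * (g i ^ 2 / L i)) := fun i => by
    rw [div_eq_mul_one_div, one_div_mul_rpow_eq (hL i) hαβ hSα.ne' (hp i)]
    ring
  rw [sum_mul_wnormSq_sub_smul_basisVec hpsum hpL, Finset.sum_congr rfl fun i _ => hweight i,
    ← Finset.mul_sum]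
  ring

theorem sub_eq_smul_sub_add_sub {V : Type*} [AddCommGroup V] [Module ℝ V] {τ c : ℝ} {x y z : V}
    (hx : x = τ • z + (1 - τ) • y) (hτ : τ * c = 1) (u : V) :
    z - u = (c - 1) • (x - y) + (x - u) := by
  subst hx
  linear_combination (norm := module) hτ • (y - z)

theorem CoordSmooth.sum_mul_le_sub {n : ℕ} {f : (Fin n → ℝ) → ℝ} {L p : Fin n → ℝ}
    (hsmooth : CoordSmooth f L) (hf : Differentiable ℝ f) (hL : ∀ i, 0 < L i)
    (hp0 : ∀ i, 0 ≤ p i) (hp : ∑ i, p i = 1) (x : Fin n → ℝ) :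
    ∑ i, p i * f (x - (1 / L i * coordGrad f x i) • basisVec i)
      ≤ f x - 1 / 2 * ∑ i, p i * (coordGrad f x i ^ 2 / L i) := by
  calc ∑ i, p i * f (x - (1 / L i * coordGrad f x i) • basisVec i)
      ≤ ∑ i, p i * (f x - coordGrad f x i ^ 2 / (2 * L i)) := by
        gcongr with i
        · exact hp0 i
        · exact hsmooth.le_sub_sq_div hf x (hL i)
    _ = f x - 1 / 2 * ∑ i, p i * (coordGrad f x i ^ 2 / L i) := by
        simp only [mul_sub, Finset.sum_sub_distrib, ← Finset.sum_mul, hp, one_mul, Finset.mul_sum]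
        congr 1
        refine Finset.sum_congr rfl fun i _ => ?_
        field_simp

theorem stmt_11_general (n : ℕ) (f : (Fin n → ℝ) → ℝ) (L : Fin n → ℝ)
    (hf : Differentiable ℝ f) (hconv : ConvexOn ℝ Set.univ f) (hL : ∀ i, 0 < L i)
    (hsmooth : CoordSmooth f L)
    (β : ℝ)
    (α Sα : ℝ) (hα : α = (1 - β) / 2) (hS : Sα = ∑ i, L i ^ α)
    (p : Fin n → ℝ) (hp : ∀ i, p i = L i ^ α / Sα)
    (η τ : ℝ) (hη : 0 < η) (hτ1 : 1 / (η * Sα ^ 2) ≤ 1) (hτ : τ = 1 / (η * Sα ^ 2))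
    (yk zk xk1 : Fin n → ℝ) (hx : xk1 = τ • zk + (1 - τ) • yk)
    (Y Z : Fin n → Fin n → ℝ)
    (hY : ∀ i, Y i = xk1 - (1 / L i * coordGrad f xk1 i) • basisVec i)
    (hZ : ∀ i, Z i = zk - (η / (p i * L i ^ β) * coordGrad f xk1 i) • basisVec i)
    (u : Fin n → ℝ) :
    0 ≤ (η ^ 2 * Sα ^ 2 - η) * (f yk - f u)
        - η ^ 2 * Sα ^ 2 * ∑ i, p i * (f (Y i) - f u)
        + (1 / 2) * wnormSq L β (zk - u)
        - (1 / 2) * ∑ i, p i * wnormSq L β (Z i - u) := by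
  rcases isEmpty_or_nonempty (Fin n) with hn | hn
  · simp [wnormSq, Subsingleton.elim yk u]
  have hLα : ∀ i, 0 < L i ^ α := fun i => Real.rpow_pos_of_pos (hL i) α
  have hSα : 0 < Sα := hS ▸ Finset.sum_pos (fun i _ => hLα i) Finset.univ_nonempty
  have hp0 : ∀ i, 0 < p i := fun i => (hp i).symm ▸ div_pos (hLα i) hSα
  have hpsum : ∑ i, p i = 1 := by
    rw [Finset.sum_congr rfl fun i _ => hp i, ← Finset.sum_div, ← hS, div_self hSα.ne']
  have hc : 1 ≤ η * Sα ^ 2 := (div_le_one (by positivity)).mp (by simpa using hτ1)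
  have hτc : τ * (η * Sα ^ 2) = 1 := by rw [hτ, one_div, inv_mul_cancel₀ (by positivity)]
  set D := fderiv ℝ f xk1
  set g := coordGrad f xk1
  have hZsum : ∑ i, p i * wnormSq L β (Z i - u)
      = wnormSq L β (zk - u) - 2 * η * D (zk - u)
        + η ^ 2 * Sα ^ 2 * ∑ i, p i * (g i ^ 2 / L i) := by
    have hZu : ∀ i, Z i - u = (zk - u) - (η / (p i * L i ^ β) * g i) • basisVec i := fun i => by
      rw [hZ i]
      abel
    simp only [hZu, sum_mul_wnormSq_sub_smul_basisVec_of_eq_rpow_div hL (by rw [hα]; ring) hSα hp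
      hpsum, D, g, fderiv_apply_eq_sum_mul_coordGrad, mul_comm (coordGrad f xk1 _)]
  have hYsum : ∑ i, p i * (f (Y i) - f u) ≤ f xk1 - 1 / 2 * ∑ i, p i * (g i ^ 2 / L i) - f u := by
    simp only [mul_sub, Finset.sum_sub_distrib, ← Finset.sum_mul, hpsum, one_mul, hY]
    linarith [hsmooth.sum_mul_le_sub hf hL (fun i => (hp0 i).le) hpsum xk1]
  have hcouple : D (zk - u) = (η * Sα ^ 2 - 1) * D (xk1 - yk) + D (xk1 - u) := by
    rw [sub_eq_smul_sub_add_sub hx hτc u, map_add, map_smul, smul_eq_mul]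
  have hy := hconv.add_fderiv_sub_le (Set.mem_univ xk1) (Set.mem_univ yk) (hf xk1)
  have hu := hconv.add_fderiv_sub_le (Set.mem_univ xk1) (Set.mem_univ u) (hf xk1)
  rw [← neg_sub, map_neg] at hy hu
  rw [hZsum, hcouple]
  linear_combination (η ^ 2 * Sα ^ 2) * hYsum + (η * (η * Sα ^ 2 - 1)) * hy + η * hu

/-- Lemma 6.4: the per-iteration inequality of NU_ACDM^ns. -/
theorem stmt_11 (n : ℕ) (f : (Fin n → ℝ) → ℝ) (L : Fin n → ℝ)
    (hf : Differentiable ℝ f) (hconv : ConvexOn ℝ Set.univ f) (hL : ∀ i, 0 < L i)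
    (hsmooth : CoordSmooth f L)
    (β : ℝ) (hβ : β ∈ Set.Icc (0 : ℝ) 1)
    (α Sα : ℝ) (hα : α = (1 - β) / 2) (hS : Sα = ∑ i, L i ^ α)
    (p : Fin n → ℝ) (hp : ∀ i, p i = L i ^ α / Sα)
    (η τ : ℝ) (hη : 0 < η) (hτ1 : 1 / (η * Sα ^ 2) ≤ 1) (hτ : τ = 1 / (η * Sα ^ 2))
    (yk zk xk1 : Fin n → ℝ) (hx : xk1 = τ • zk + (1 - τ) • yk)
    (Y Z : Fin n → Fin n → ℝ)
    (hY : ∀ i, Y i = xk1 - (1 / L i * coordGrad f xk1 i) • basisVec i)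
    (hZ : ∀ i, Z i = zk - (η / (p i * L i ^ β) * coordGrad f xk1 i) • basisVec i)
    (u : Fin n → ℝ) :
    0 ≤ (η ^ 2 * Sα ^ 2 - η) * (f yk - f u)
        - η ^ 2 * Sα ^ 2 * ∑ i, p i * (f (Y i) - f u)
        + (1 / 2) * wnormSq L β (zk - u)
        - (1 / 2) * ∑ i, p i * wnormSq L β (Z i - u) :=
  stmt_11_general n f L hf hconv hL hsmooth β α Sα hα hS p hp η τ hη hτ1 hτ yk zk xk1 hx Y Z hY hZ u
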